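/- arXiv:1807.09040 — 7 statements merged into one kernel-verified Lean document; each statement's English description precedes it below -/
import Mathlib

section
/- For every integer T > 1, letting β = (T+1)^(1/T), we have β^T - β^(T-1) - 1 > 0. (This shows the unique positive root of X^T - X^{T-1} - 1 is strictly less than (T+1)^(1/T), i.e., the (T-1,∞)-RLL capacity is strictly below the (T,T-1)-SEC capacity.) -/
lemma aux_nat (T : ℕ) (hT : 2 ≤ T) : (T + 1) ^ (T - 1) < T ^ T := by
  induction T, hT using Nat.le_induction with
  | base => norm_num
  | succ T hT ih =>
    -- goal: (T+2)^T < (T+1)^(T+1)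
    have h1 : ((T + 2) * T) ^ T < ((T + 1) ^ 2) ^ T := by
      apply Nat.pow_lt_pow_left _ (by omega)
      nlinarith
    have h2 : (T + 2) ^ T * (T + 1) ^ (T - 1) < (T + 1) ^ (T + 1) * (T + 1) ^ (T - 1) := by
      calc (T + 2) ^ T * (T + 1) ^ (T - 1)
          < (T + 2) ^ T * T ^ T := by
            exact mul_lt_mul_of_pos_left ih (pow_pos (by omega) T)
        _ = ((T + 2) * T) ^ T := (mul_pow _ _ _).symm
        _ < ((T + 1) ^ 2) ^ T := h1
        _ = (T + 1) ^ (2 * T) := by rw [← pow_mul]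
        _ = (T + 1) ^ (T + 1) * (T + 1) ^ (T - 1) := by
            rw [← pow_add]; congr 1; omega
    have := Nat.lt_of_mul_lt_mul_right h2
    simpa [Nat.succ_sub_one] using this

theorem stmt_5 (T : ℕ) (hT : 1 < T) :
    (((T : ℝ) + 1) ^ ((1 : ℝ) / T)) ^ T - (((T : ℝ) + 1) ^ ((1 : ℝ) / T)) ^ (T - 1) - 1 > 0 := by
  set β : ℝ := ((T : ℝ) + 1) ^ ((1 : ℝ) / T) with hβ
  have hTR : (0:ℝ) < T := by positivity
  have h0 : (0:ℝ) ≤ (T:ℝ) + 1 := by positivity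
  have hβ0 : 0 ≤ β := Real.rpow_nonneg h0 _
  have hβT : β ^ T = (T:ℝ) + 1 := by
    rw [hβ, ← Real.rpow_natCast (((T : ℝ) + 1) ^ ((1 : ℝ) / T)) T, ← Real.rpow_mul h0]
    rw [one_div, inv_mul_cancel₀ (by exact_mod_cast (by omega : T ≠ 0)), Real.rpow_one]
  have hnat := aux_nat T hT
  have hcast : ((T:ℝ) + 1) ^ (T - 1) < (T:ℝ) ^ T := by exact_mod_cast hnat
  have hk : (β ^ (T - 1)) ^ T < ((T:ℝ)) ^ T := by
    calc (β ^ (T - 1)) ^ T = (β ^ T) ^ (T - 1) := by rw [← pow_mul, ← pow_mul, Nat.mul_comm]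
      _ = ((T:ℝ) + 1) ^ (T - 1) := by rw [hβT]
      _ < (T:ℝ) ^ T := hcast
  have hlt : β ^ (T - 1) < (T:ℝ) := lt_of_pow_lt_pow_left₀ T (by positivity) hk
  rw [hβT]
  linarith
end

section
/- Every (T−1, ⌈(T+w−2)/2⌉)-SEC binary sequence (with blocks of length T−1) is a (T, w)-SWC sequence, provided w ≤ T and T ≥ 2: any window of T consecutive bits contains at least w ones. -/
/-!
Cut the bits into blocks of length `L = T - 1`. A window of length `T` starting inside block `q`
consists of a final segment of block `q` and an initial segment of block `q + 1`. The parts of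
the two blocks it leaves out have `L - 1` positions in total, hence contain at most `L - 1` ones,
so the window contains at least `2v - (L - 1)` ones, where `v = ⌈(T + w - 2) / 2⌉`. Since
`2v ≥ L + w - 1`, this is at least `w`.
-/

open Finset

lemma sum_Icc_one_add (b : ℕ → ℕ) (j n : ℕ) :
    ∑ t ∈ Icc 1 n, b (j + t) = ∑ i ∈ Ioc j (j + n), b i := by
  rw [← Icc_add_one_left_eq_Ioc, ← map_add_left_Icc, sum_map]
  rfl

section ZeroOneSums

variable {b : ℕ → ℕ}

lemma sum_Ioc_le_length (hb : ∀ i, b i ≤ 1) (a c : ℕ) : ∑ i ∈ Ioc a c, b i ≤ c - a := by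
  simpa using sum_le_card_nsmul (Ioc a c) b 1 fun i _ => hb i

lemma sum_Ioc_le_sum_Ioc_right_add (hb : ∀ i, b i ≤ 1) {a c d : ℕ} (hac : a ≤ c) (hcd : c ≤ d) :
    ∑ i ∈ Ioc a d, b i ≤ ∑ i ∈ Ioc a c, b i + (d - c) := by
  rw [← sum_Ioc_consecutive b hac hcd]
  exact Nat.add_le_add_left (sum_Ioc_le_length hb c d) _

lemma sum_Ioc_le_add_sum_Ioc_left (hb : ∀ i, b i ≤ 1) {a c d : ℕ} (hac : a ≤ c) (hcd : c ≤ d) :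
    ∑ i ∈ Ioc a d, b i ≤ (c - a) + ∑ i ∈ Ioc c d, b i := by
  rw [← sum_Ioc_consecutive b hac hcd]
  exact Nat.add_le_add_right (sum_Ioc_le_length hb a c) _

/-- Stated additively, since `2 * v - (L - 1)` would truncate in `ℕ`. -/
theorem two_mul_le_sum_window_add (hb : ∀ i, b i ≤ 1) {L v m : ℕ} (hL : 0 < L)
    (hblock : ∀ q < m, v ≤ ∑ i ∈ Ioc (q * L) (q * L + L), b i)
    {j : ℕ} (hj : j + L + 1 ≤ m * L) :
    2 * v ≤ ∑ i ∈ Ioc j (j + L + 1), b i + (L - 1) := by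
  set q := j / L
  have hqj : q * L ≤ j := Nat.div_mul_le_self j L
  have hjq : j < q * L + L := Nat.lt_div_mul_add hL
  have hqm : q + 1 < m := Nat.lt_of_mul_lt_mul_right (by linarith : (q + 1) * L < m * L)
  have hfirst : v ≤ (j - q * L) + ∑ i ∈ Ioc j (q * L + L), b i :=
    (hblock q (by omega)).trans (sum_Ioc_le_add_sum_Ioc_left hb hqj hjq.le)
  have hsecond : v ≤ ∑ i ∈ Ioc (q * L + L) (j + L + 1), b i + (q * L + L + L - (j + L + 1)) := by
    have := hblock (q + 1) hqm
    rw [add_mul, one_mul] at this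
    exact this.trans (sum_Ioc_le_sum_Ioc_right_add hb (by omega) (by omega))
  rw [← sum_Ioc_consecutive b hjq.le (by omega)]
  omega

end ZeroOneSums

/-- `(T + w - 1) / 2` is `⌈(T + w - 2) / 2⌉` written in `ℕ`. -/
theorem stmt_12_general (m T w : ℕ) (hT : 2 ≤ T)
    (b : ℕ → ℕ) (hbin : ∀ i, b i ≤ 1)
    (hSEC : ∀ j < m, (T + w - 1) / 2 ≤ ∑ t ∈ Finset.Icc 1 (T - 1), b (j * (T - 1) + t)) :
    ∀ j, j + T ≤ m * (T - 1) → w ≤ ∑ t ∈ Finset.Icc 1 T, b (j + t) := by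
  intro j hj
  simp only [sum_Icc_one_add] at hSEC ⊢
  have hwindow := two_mul_le_sum_window_add hbin (by omega : 0 < T - 1) hSEC
    (j := j) (by omega)
  have hceil : T + w - 2 ≤ 2 * ((T + w - 1) / 2) := by omega
  rw [show j + (T - 1) + 1 = j + T by omega] at hwindow
  omega

/-- Every (T−1, ⌈(T+w−2)/2⌉)-SEC binary sequence is a (T, w)-SWC sequence
(`(T + w - 1) / 2` is the natural-number expression for `⌈(T+w−2)/2⌉`). -/
theorem stmt_12 (m T w : ℕ) (hT : 2 ≤ T) (hw : 1 ≤ w) (hwT : w ≤ T)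
    (b : ℕ → ℕ) (hbin : ∀ i, b i ≤ 1)
    (hSEC : ∀ j < m, (T + w - 1) / 2 ≤ ∑ t ∈ Finset.Icc 1 (T - 1), b (j * (T - 1) + t)) :
    ∀ j, j + T ≤ m * (T - 1) → w ≤ ∑ t ∈ Finset.Icc 1 T, b (j + t) :=
  stmt_12_general m T w hT b hbin hSEC
end

section
/- For positive integers T, w, m with w ≤ T, every (⌊T/(m+1)⌋, ⌈w/m⌉)-SEC binary sequence is a ((m+1)⌊T/(m+1)⌋, m⌈w/m⌉)-SWC sequence: any window of (m+1)⌊T/(m+1)⌋ consecutive bits completely contains at least m full blocks of length ⌊T/(m+1)⌋, hence contains at least m⌈w/m⌉ ones. -/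
/-!
A window of length `(m + 1) L` starting after position `j` contains the `m` consecutive full
blocks of length `L` that begin with block number `⌊j / L⌋ + 1`, and each of those blocks
carries at least `⌈w / m⌉` ones.
-/

open Finset

theorem Finset.sum_Icc_one_add_eq_sum_Ioc {M : Type*} [AddCommMonoid M] (f : ℕ → M) (a N : ℕ) :
    ∑ t ∈ Icc 1 N, f (a + t) = ∑ i ∈ Ioc a (a + N), f i := by
  have hshift := map_add_left_Ioc 0 N a
  rw [add_zero] at hshift
  rw [← zero_add 1, Icc_add_one_left_eq_Ioc, ← hshift, sum_map]
  rfl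

theorem nsmul_le_sum_Ioc_of_le_block_sums {M : Type*} [AddCommMonoid M] [PartialOrder M]
    [IsOrderedAddMonoid M] (f : ℕ → M) {c : M} {q L : ℕ} :
    ∀ n, (∀ i < n, c ≤ ∑ x ∈ Ioc ((q + i) * L) ((q + i) * L + L), f x) →
      n • c ≤ ∑ x ∈ Ioc (q * L) ((q + n) * L), f x
  | 0, _ => by simp
  | n + 1, hblock => by
    have hsplit : (q + (n + 1)) * L = (q + n) * L + L := by ring
    rw [hsplit, ← sum_Ioc_consecutive _ (Nat.mul_le_mul_right L (Nat.le_add_right q n))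
      (Nat.le_add_right _ L), succ_nsmul]
    exact add_le_add
      (nsmul_le_sum_Ioc_of_le_block_sums f n fun i hi => hblock i (by omega))
      (hblock n n.lt_succ_self)

theorem le_block_start_and_block_end_le_window (j m : ℕ) {L : ℕ} (hL : 0 < L) :
    j ≤ (j / L + 1) * L ∧ (j / L + 1 + m) * L ≤ j + (m + 1) * L := by
  have hdiv := Nat.div_add_mod j L
  have hmod := Nat.mod_lt j hL
  have hstart : (j / L + 1) * L = L * (j / L) + L := by ring
  have hend : (j / L + 1 + m) * L = L * (j / L) + (m + 1) * L := by ring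
  omega

/-- `(w + m - 1) / m` is `⌈w / m⌉` in `ℕ`. -/
theorem stmt_13_general (k T w m : ℕ)
    (hL : 1 ≤ T / (m + 1))
    (b : ℕ → ℕ)
    (hSEC : ∀ j < k,
      (w + m - 1) / m ≤ ∑ t ∈ Finset.Icc 1 (T / (m + 1)), b (j * (T / (m + 1)) + t)) :
    ∀ j, j + (m + 1) * (T / (m + 1)) ≤ k * (T / (m + 1)) →
      m * ((w + m - 1) / m) ≤ ∑ t ∈ Finset.Icc 1 ((m + 1) * (T / (m + 1))), b (j + t) := by
  intro j hj
  set L := T / (m + 1)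
  obtain ⟨hstart, hend⟩ := le_block_start_and_block_end_le_window j m hL
  set q := j / L + 1
  have hqk : q + m ≤ k := Nat.le_of_mul_le_mul_right (hend.trans hj) hL
  calc m * ((w + m - 1) / m)
      ≤ ∑ x ∈ Ioc (q * L) ((q + m) * L), b x :=
        nsmul_le_sum_Ioc_of_le_block_sums b m fun i hi => by
          rw [← sum_Icc_one_add_eq_sum_Ioc]
          exact hSEC (q + i) (by omega)
    _ ≤ ∑ x ∈ Ioc j (j + (m + 1) * L), b x := sum_le_sum_of_subset (Ioc_subset_Ioc hstart hend)
    _ = _ := (sum_Icc_one_add_eq_sum_Ioc b j _).symm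

/-- Every (⌊T/(m+1)⌋, ⌈w/m⌉)-SEC binary sequence is a
((m+1)⌊T/(m+1)⌋, m⌈w/m⌉)-SWC sequence
(`(w + m - 1) / m` is the natural-number expression for `⌈w/m⌉`). -/
theorem stmt_13 (k T w m : ℕ) (hm : 1 ≤ m) (hw : 1 ≤ w) (hwT : w ≤ T)
    (hL : 1 ≤ T / (m + 1))
    (b : ℕ → ℕ) (hbin : ∀ i, b i ≤ 1)
    (hSEC : ∀ j < k,
      (w + m - 1) / m ≤ ∑ t ∈ Finset.Icc 1 (T / (m + 1)), b (j * (T / (m + 1)) + t)) :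
    ∀ j, j + (m + 1) * (T / (m + 1)) ≤ k * (T / (m + 1)) →
      m * ((w + m - 1) / m) ≤ ∑ t ∈ Finset.Icc 1 ((m + 1) * (T / (m + 1))), b (j + t) :=
  stmt_13_general k T w m hL b hSEC
end

section
/- The number of binary sequences of length (T+w)k satisfying the (T,w)-SWC constraint is at least (Σ_{i=w}^{T} C(T,i))^k: concatenating k vectors, each consisting of T bits with at least w ones followed by w ones, yields a valid (T,w)-SWC sequence, and distinct choices give distinct sequences. -/
/-!
Write the word as blocks of length `T + w`, each consisting of `T` free bits with at least `w`
ones followed by `w` forced ones. A window of length `T` starting at offset `r` of a block either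
contains that block's forced run (`w ≤ r ≤ T`), or all its zeros lie in the free part of a single
block (that of the same block if `r < w`, of the next one if `T < r`), so it has at most `T - w`
zeros. Different choices of the free parts give different words.
-/

open Finset

/-- Block `q`, at positions `[q * (T + w), (q + 1) * (T + w))`, is the indicator of `g q`
followed by `w` ones. -/
def blockSeq (T w : ℕ) (g : ℕ → Finset (Fin T)) (n : ℕ) : Bool :=
  if h : n % (T + w) < T then decide ((⟨n % (T + w), h⟩ : Fin T) ∈ g (n / (T + w))) else true

namespace blockSeq

variable {T w : ℕ} (g : ℕ → Finset (Fin T))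

theorem mul_add {q r : ℕ} (hr : r < T + w) :
    blockSeq T w g (q * (T + w) + r) =
      if h : r < T then decide ((⟨r, h⟩ : Fin T) ∈ g q) else true := by
  have hm : 0 < T + w := by omega
  have hmod : (q * (T + w) + r) % (T + w) = r := by
    rw [Nat.mul_add_mod_self_right, Nat.mod_eq_of_lt hr]
  have hdiv : (q * (T + w) + r) / (T + w) = q := by
    rw [mul_comm, Nat.mul_add_div hm, Nat.div_eq_of_lt hr, Nat.add_zero]
  simp only [blockSeq, hmod, hdiv]

theorem mul_add_val (q : ℕ) (i : Fin T) :
    blockSeq T w g (q * (T + w) + i) = decide (i ∈ g q) := by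
  rw [mul_add g (by omega), dif_pos i.isLt]

theorem eq_false_iff {n : ℕ} :
    blockSeq T w g n = false ↔
      ∃ h : n % (T + w) < T, (⟨n % (T + w), h⟩ : Fin T) ∉ g (n / (T + w)) := by
  unfold blockSeq
  split_ifs with h <;> simp [h]

theorem card_filter_eq_false_le {s : Finset ℕ} {q : ℕ}
    (hs : ∀ n ∈ s, blockSeq T w g n = false → n / (T + w) = q) :
    #{n ∈ s | blockSeq T w g n = false} ≤ T - #(g q) := by
  have hsub : {n ∈ s | blockSeq T w g n = false} ⊆
      (g q)ᶜ.image (fun i : Fin T => q * (T + w) + i) := by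
    intro n hn
    obtain ⟨hns, hn⟩ := mem_filter.mp hn
    obtain ⟨hlt, hnot⟩ := (eq_false_iff g).mp hn
    refine mem_image.mpr ⟨⟨n % (T + w), hlt⟩, by simpa [hs n hns hn] using hnot, ?_⟩
    rw [← hs n hns hn]
    exact Nat.div_add_mod' n (T + w)
  calc #{n ∈ s | blockSeq T w g n = false}
      ≤ #((g q)ᶜ.image (fun i : Fin T => q * (T + w) + i)) := card_le_card hsub
    _ ≤ #(g q)ᶜ := card_image_le
    _ = T - #(g q) := by rw [card_compl, Fintype.card_fin]

theorem le_card_filter_of_div_eq {q j : ℕ} (hq : w ≤ #(g q))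
    (hs : ∀ n ∈ Ico j (j + T), blockSeq T w g n = false → n / (T + w) = q) :
    w ≤ #{n ∈ Ico j (j + T) | blockSeq T w g n = true} := by
  have hzeros := card_filter_eq_false_le g hs
  have hsplit := card_filter_add_card_filter_not (s := Ico j (j + T))
    (fun n => blockSeq T w g n = true)
  simp only [Bool.not_eq_true, Nat.card_Ico] at hsplit
  have := card_le_univ (g q)
  simp only [Fintype.card_fin] at this
  omega

theorem le_card_filter_Ico (hg : ∀ q, w ≤ #(g q)) (j : ℕ) :
    w ≤ #{n ∈ Ico j (j + T) | blockSeq T w g n = true} := by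
  rcases Nat.eq_zero_or_pos w with rfl | hw
  · exact Nat.zero_le _
  have hm : 0 < T + w := by omega
  obtain ⟨q, r, hr, rfl⟩ : ∃ q r, r < T + w ∧ j = q * (T + w) + r :=
    ⟨j / (T + w), j % (T + w), Nat.mod_lt _ hm, (Nat.div_add_mod' j _).symm⟩
  have hsucc : (q + 1) * (T + w) = q * (T + w) + (T + w) := Nat.succ_mul q (T + w)
  rcases lt_or_ge r w with hrw | hwr
  · refine le_card_filter_of_div_eq g (hg q) fun n hn _ => ?_
    rw [mem_Ico] at hn
    exact Nat.div_eq_of_lt_le (by omega) (by omega)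
  rcases le_or_gt r T with hrT | hTr
  · have hrun : Ico (q * (T + w) + T) (q * (T + w) + T + w) ⊆
        {n ∈ Ico (q * (T + w) + r) (q * (T + w) + r + T) | blockSeq T w g n = true} := by
      intro n hn
      rw [mem_Ico] at hn
      obtain ⟨i, rfl⟩ : ∃ i, n = q * (T + w) + i := ⟨n - q * (T + w), by omega⟩
      rw [mem_filter, mem_Ico, mul_add g (by omega), dif_neg (by omega)]
      exact ⟨⟨by omega, by omega⟩, rfl⟩
    simpa using card_le_card hrun
  · refine le_card_filter_of_div_eq g (hg (q + 1)) fun n hn hzero => ?_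
    rw [mem_Ico] at hn
    obtain ⟨hlt, -⟩ := (eq_false_iff g).mp hzero
    have hn' : (q + 1) * (T + w) ≤ n := by
      by_contra! hlow
      have hdiv : n / (T + w) = q := Nat.div_eq_of_lt_le (by omega) hlow
      have := Nat.div_add_mod' n (T + w)
      rw [hdiv] at this
      omega
    exact Nat.div_eq_of_lt_le hn' (by rw [Nat.succ_mul]; omega)

end blockSeq

theorem card_filter_fin_eq_card_filter_Ico (b : ℕ → Bool) {N j T : ℕ} (h : j + T ≤ N) :
    #{i : Fin N | j ≤ (i : ℕ) ∧ (i : ℕ) < j + T ∧ b i = true} =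
      #{n ∈ Ico j (j + T) | b n = true} := by
  rw [← card_map Fin.valEmbedding]
  congr 1
  ext n
  simp only [mem_map, mem_filter, mem_univ, true_and, Fin.valEmbedding_apply, mem_Ico]
  constructor
  · rintro ⟨i, hi, rfl⟩
    exact ⟨⟨hi.1, hi.2.1⟩, hi.2.2⟩
  · rintro ⟨hn, hb⟩
    exact ⟨⟨n, by omega⟩, ⟨hn.1, hn.2, hb⟩, rfl⟩

theorem Fintype.card_finset_len_ge (α : Type*) [Fintype α] (w : ℕ) :
    Fintype.card {s : Finset α // w ≤ #s} =
      ∑ i ∈ Icc w (Fintype.card α), (Fintype.card α).choose i := by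
  classical
  rw [Fintype.card_subtype,
    card_eq_sum_card_fiberwise (f := Finset.card) (t := Icc w (Fintype.card α))]
  · refine Finset.sum_congr rfl fun i hi => ?_
    rw [mem_Icc] at hi
    calc #{s ∈ {s : Finset α | w ≤ #s} | #s = i}
        = #(powersetCard i (univ : Finset α)) := by
          congr 1
          ext s
          simp only [mem_filter, mem_univ, true_and, mem_powersetCard, subset_univ]
          omega
      _ = (Fintype.card α).choose i := by rw [card_powersetCard, card_univ]
  · intro s hs
    rw [coe_filter, Set.mem_ofPred_eq] at hs
    rw [mem_coe, mem_Icc]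
    exact ⟨hs.2, card_le_univ s⟩

-- Blocks beyond `k` are never read; padding them with `univ` gives every block at least `w` ones.
def blockWord (T w k : ℕ) (f : Fin k → Finset (Fin T)) (i : Fin ((T + w) * k)) : Bool :=
  blockSeq T w (fun q => if h : q < k then f ⟨q, h⟩ else univ) i

namespace blockWord

variable {T w k : ℕ}

theorem injective : Function.Injective (blockWord T w k) := by
  intro f₁ f₂ h
  funext q
  ext i
  have hpos : q * (T + w) + i < (T + w) * k := by
    have := Nat.mul_le_mul_right (T + w) q.isLt
    rw [Nat.succ_mul, Nat.mul_comm k] at this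
    omega
  simpa [blockWord, blockSeq.mul_add_val] using congrFun h ⟨_, hpos⟩

theorem le_card_window (hwT : w ≤ T) {f : Fin k → Finset (Fin T)} (hf : ∀ q, w ≤ #(f q))
    {j : ℕ} (hj : j + T ≤ (T + w) * k) :
    w ≤ #{i : Fin ((T + w) * k) | j ≤ (i : ℕ) ∧ (i : ℕ) < j + T ∧ blockWord T w k f i = true} := by
  unfold blockWord
  rw [card_filter_fin_eq_card_filter_Ico _ hj]
  refine blockSeq.le_card_filter_Ico _ (fun q => ?_) j
  split_ifs
  · exact hf _
  · simpa using hwT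

end blockWord

theorem stmt_14_general (T w k : ℕ) (hwT : w ≤ T) :
    (∑ i ∈ Finset.Icc w T, Nat.choose T i) ^ k ≤
      Nat.card {b : Fin ((T + w) * k) → Bool //
        ∀ j : ℕ, j + T ≤ (T + w) * k →
          w ≤ (Finset.univ.filter
                (fun i : Fin ((T + w) * k) => j ≤ (i : ℕ) ∧ (i : ℕ) < j + T ∧ b i = true)).card} := by
  let encode (f : Fin k → {s : Finset (Fin T) // w ≤ #s}) :
      {b : Fin ((T + w) * k) → Bool // ∀ j : ℕ, j + T ≤ (T + w) * k →
        w ≤ #{i : Fin ((T + w) * k) | j ≤ (i : ℕ) ∧ (i : ℕ) < j + T ∧ b i = true}} :=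
    ⟨blockWord T w k fun q => f q, fun _ hj => blockWord.le_card_window hwT (fun q => (f q).2) hj⟩
  have hencode : Function.Injective encode := by
    intro f₁ f₂ h
    have hwords : blockWord T w k (fun q => f₁ q) = blockWord T w k (fun q => f₂ q) :=
      congrArg Subtype.val h
    exact funext fun q => Subtype.ext (congrFun (blockWord.injective hwords) q)
  calc (∑ i ∈ Icc w T, T.choose i) ^ k
      = Nat.card (Fin k → {s : Finset (Fin T) // w ≤ #s}) := by
        rw [Nat.card_eq_fintype_card, Fintype.card_fun, Fintype.card_fin,
          Fintype.card_finset_len_ge, Fintype.card_fin]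
    _ ≤ _ := Nat.card_le_card_of_injective encode hencode

/-- The number of binary sequences of length (T+w)k satisfying the (T,w)-SWC constraint is
at least (Σ_{i=w}^{T} C(T,i))^k. -/
theorem stmt_14 (T w k : ℕ) (hw : 1 ≤ w) (hwT : w ≤ T) (hk : 1 ≤ k) :
    (∑ i ∈ Finset.Icc w T, Nat.choose T i) ^ k ≤
      Nat.card {b : Fin ((T + w) * k) → Bool //
        ∀ j : ℕ, j + T ≤ (T + w) * k →
          w ≤ (Finset.univ.filter
                (fun i : Fin ((T + w) * k) => j ≤ (i : ℕ) ∧ (i : ℕ) < j + T ∧ b i = true)).card} :=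
  stmt_14_general T w k hwT
end

section
/- Outage avoidance for RLL (sufficiency): consider the energy process E(i+1) = min(max(E(i) + b_i − B, 0), E_max) for a binary sequence b₁…bₙ, with 0 < B < 1. If the sequence is a (d,∞)-RLL sequence with d ≥ ⌈B/(1−B)⌉ (so that d(1−B) ≥ B), and E_max ≥ E(1) ≥ B, then no outage occurs: E(i) + b_i ≥ B for all 1 ≤ i ≤ n. -/
/-- Outage avoidance for (d,∞)-RLL codes (sufficiency). -/
theorem stmt_16 (n d : ℕ) (hd : 1 ≤ d) (B Emax : ℝ) (hB0 : 0 < B) (hB1 : B < 1)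
    (hdB : (⌈B / (1 - B)⌉₊ : ℕ) ≤ d)
    (b : ℕ → ℕ) (hbin : ∀ i, b i ≤ 1)
    (hRLL : ∀ i, 1 ≤ i → i + d ≤ n → b i = 0 → ∀ t, 1 ≤ t → t ≤ d → b (i + t) = 1)
    (htail : ∀ i, 1 ≤ i → i ≤ n → n < i + d → b i = 1)
    (E : ℕ → ℝ)
    (hE1 : B ≤ E 1) (hE1max : E 1 ≤ Emax)
    (hdyn : ∀ i, 1 ≤ i → E (i + 1) = min (max (E i + (b i : ℝ) - B) 0) Emax) :
    ∀ i, 1 ≤ i → i ≤ n → B ≤ E i + (b i : ℝ) := by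
  have hEmaxB : B ≤ Emax := le_trans hE1 hE1max
  have hEmax0 : 0 < Emax := lt_of_lt_of_le hB0 hEmaxB
  have h1B : 0 < 1 - B := by linarith
  have hdB' : B ≤ (d : ℝ) * (1 - B) := by
    have h1 : B / (1 - B) ≤ (d : ℝ) := by
      calc B / (1 - B) ≤ (⌈B / (1 - B)⌉₊ : ℝ) := Nat.le_ceil _
        _ ≤ (d : ℝ) := by exact_mod_cast hdB
    have h2 : (B / (1 - B)) * (1 - B) ≤ (d : ℝ) * (1 - B) :=
      mul_le_mul_of_nonneg_right h1 (le_of_lt h1B)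
    have h3 : (B / (1 - B)) * (1 - B) = B := by field_simp
    linarith
  -- E is nonnegative
  have hEnn : ∀ i, 1 ≤ i → 0 ≤ E i := by
    intro i hi
    match i, hi with
    | 1, _ => linarith
    | (k + 2), _ =>
      rw [hdyn (k + 1) (by omega)]
      exact le_min (le_max_right _ _) (le_of_lt hEmax0)
  -- run lemma: through a run of ones, energy grows up to Emax
  have run : ∀ j, 1 ≤ j → ∀ t : ℕ, (∀ s, s < t → b (j + s) = 1) →
      min (E j + (t : ℝ) * (1 - B)) Emax ≤ E (j + t) := by
    intro j hj t
    induction t with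
    | zero =>
      intro _
      simpa using min_le_left (E j) Emax
    | succ t IH =>
      intro hones
      have IH' := IH (fun s hs => hones s (Nat.lt_succ_of_lt hs))
      have hbt : b (j + t) = 1 := hones t (Nat.lt_succ_self t)
      have hdynt := hdyn (j + t) (by omega)
      rw [show j + (t + 1) = (j + t) + 1 by omega, hdynt, hbt]
      have hZnn : 0 ≤ E (j + t) + (1 : ℝ) - B := by
        have := hEnn (j + t) (by omega)
        linarith
      have key : min (E j + ((t : ℝ) + 1) * (1 - B)) Emax ≤ E (j + t) + 1 - B := by
        rcases le_total (E j + (t : ℝ) * (1 - B)) Emax with h' | h'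
        · rw [min_eq_left h'] at IH'
          have := min_le_left (E j + ((t : ℝ) + 1) * (1 - B)) Emax
          nlinarith
        · rw [min_eq_right h'] at IH'
          have := min_le_right (E j + ((t : ℝ) + 1) * (1 - B)) Emax
          linarith
      push_cast
      refine le_min ?_ (min_le_right _ _)
      calc min (E j + ((t : ℝ) + 1) * (1 - B)) Emax ≤ E (j + t) + (1 : ℝ) - B := key
        _ = E (j + t) + (1 : ℝ) - B := rfl
        _ ≤ max (E (j + t) + (1 : ℝ) - B) 0 := le_max_left _ _
  -- at every zero position in range, E is at least B
  have zeroE : ∀ i, 1 ≤ i → i ≤ n → b i = 0 → B ≤ E i := by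
    intro i
    induction i using Nat.strong_induction_on with
    | _ i IH =>
      intro hi hin hbi
      by_cases hex : ∃ j, (1 ≤ j ∧ b j = 0) ∧ j < i
      · obtain ⟨j0, hj0P, hj0i⟩ := hex
        classical
        set P : ℕ → Prop := fun j => 1 ≤ j ∧ b j = 0 with hPdef
        set j := Nat.findGreatest P (i - 1) with hjdef
        have hj0le : j0 ≤ i - 1 := by omega
        have hPj : P j := Nat.findGreatest_spec hj0le hj0P
        have hjle : j ≤ i - 1 := Nat.findGreatest_le (i - 1)
        have hjmax : ∀ s, j < s → s ≤ i - 1 → b s = 1 := by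
          intro s hs1 hs2
          have hns : ¬ P s := Nat.findGreatest_is_greatest hs1 hs2
          have : ¬ (1 ≤ s ∧ b s = 0) := hns
          have hs1' : 1 ≤ s := by omega
          have := hbin s
          omega
        obtain ⟨hj1, hjb⟩ := hPj
        have hjlt : j < i := by omega
        have hjn : j ≤ n := by omega
        -- j + d ≤ n, else htail forces b j = 1
        have hjd : j + d ≤ n := by
          by_contra hc
          have := htail j hj1 hjn (by omega)
          omega
        -- all of j+1 .. j+d are ones, so i ≥ j + d + 1
        have hid : j + d + 1 ≤ i := by
          by_contra hc
          have ht1 : 1 ≤ i - j := by omega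
          have ht2 : i - j ≤ d := by omega
          have := hRLL j hj1 hjd hjb (i - j) ht1 ht2
          rw [show j + (i - j) = i by omega] at this
          omega
        have hEj : B ≤ E j := IH j hjlt hj1 hjn hjb
        have hEj1nn : 0 ≤ E (j + 1) := hEnn (j + 1) (by omega)
        -- run of ones from j+1 to i-1
        have hones : ∀ s, s < i - j - 1 → b (j + 1 + s) = 1 := by
          intro s hs
          exact hjmax (j + 1 + s) (by omega) (by omega)
        have hrun := run (j + 1) (by omega) (i - j - 1) hones
        rw [show j + 1 + (i - j - 1) = i by omega] at hrun
        have hcast : (d : ℝ) ≤ ((i - j - 1 : ℕ) : ℝ) := by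
          exact_mod_cast Nat.le_sub_of_add_le (by omega)
        have hmul : (d : ℝ) * (1 - B) ≤ ((i - j - 1 : ℕ) : ℝ) * (1 - B) :=
          mul_le_mul_of_nonneg_right hcast (le_of_lt h1B)
        have : B ≤ min (E (j + 1) + ((i - j - 1 : ℕ) : ℝ) * (1 - B)) Emax := by
          refine le_min ?_ hEmaxB
          nlinarith
        linarith
      · -- no zero before i: all of 1..i-1 are ones
        push_neg at hex
        have hones : ∀ s, s < i - 1 → b (1 + s) = 1 := by
          intro s hs
          have h1 : ¬ (1 ≤ 1 + s ∧ b (1 + s) = 0) := by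
            intro hP
            exact absurd (hex (1 + s) hP) (by omega)
          have := hbin (1 + s)
          omega
        have hrun := run 1 le_rfl (i - 1) hones
        rw [show 1 + (i - 1) = i by omega] at hrun
        have hnn : (0 : ℝ) ≤ ((i - 1 : ℕ) : ℝ) * (1 - B) := by positivity
        have : B ≤ min (E 1 + ((i - 1 : ℕ) : ℝ) * (1 - B)) Emax := by
          refine le_min (by linarith) hEmaxB
        linarith
  -- conclude
  intro i hi hin
  rcases Nat.le_one_iff_eq_zero_or_eq_one.mp (hbin i) with h0 | h1
  · have := zeroE i hi hin h0
    rw [h0]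
    push_cast
    linarith
  · have := hEnn i hi
    rw [h1]
    push_cast
    linarith
end

section
/- Outage avoidance for RLL (necessity of the rate condition): with 0 < B < 1, if d(1−B) < B, i.e., d < B/(1−B), then for any initial energy E(1) ≤ E_max there exists a (d,∞)-RLL sequence (the periodic sequence where every zero is followed by exactly d ones, of length m(d+1) for large m) on which an outage occurs: at some index i, E(i) + b_i < B, where E evolves by E(i+1) = min(max(E(i)+b_i−B,0), E_max). -/
/-- Outage avoidance for RLL (necessity of the rate condition): if d(1−B) < B, then on the
periodic (d,∞)-RLL sequence where every zero is followed by exactly d ones, an outage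
occurs for any initial energy E(1) ≤ E_max. -/
theorem stmt_17 (d : ℕ) (hd : 1 ≤ d) (B Emax : ℝ) (hB0 : 0 < B) (hB1 : B < 1)
    (hdB : (d : ℝ) * (1 - B) < B)
    (b : ℕ → ℕ) (hb : ∀ i, b i = if i % (d + 1) = 1 then 0 else 1)
    (E : ℕ → ℝ) (hE1 : E 1 ≤ Emax)
    (hdyn : ∀ i, 1 ≤ i → E (i + 1) = min (max (E i + (b i : ℝ) - B) 0) Emax) :
    ∃ i, 1 ≤ i ∧ E i + (b i : ℝ) < B := by
  by_contra hcon
  push_neg at hcon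
  -- no outage: B ≤ E i + b i for all i ≥ 1
  have hbound : ∀ i, 1 ≤ i → B - 1 ≤ E i := by
    intro i hi
    have h1 := hcon i hi
    have hb1 : (b i : ℝ) ≤ 1 := by
      rw [hb i]; split <;> norm_num
    linarith
  -- recursion bound
  have hrec : ∀ k : ℕ, E (1 + k) ≤ E 1 + (∑ i ∈ Finset.range k, (b (1 + i) : ℝ)) - k * B := by
    intro k
    induction k with
    | zero => simp
    | succ k ih =>
      have h1 : (1 : ℕ) ≤ 1 + k := by omega
      have h2 := hdyn (1 + k) h1
      have h3 := hcon (1 + k) h1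
      have hmax : max (E (1 + k) + (b (1 + k) : ℝ) - B) 0 = E (1 + k) + (b (1 + k) : ℝ) - B := by
        apply max_eq_left; linarith
      have h4 : E (1 + (k + 1)) ≤ E (1 + k) + (b (1 + k) : ℝ) - B := by
        have : E (1 + k + 1) = min (E (1 + k) + (b (1 + k) : ℝ) - B) Emax := by
          rw [h2, hmax]
        rw [show 1 + (k + 1) = 1 + k + 1 by ring, this]
        exact min_le_left _ _
      rw [Finset.sum_range_succ]
      push_cast
      linarith
  -- sum over m periods is at most m * d
  have hsum : ∀ m : ℕ, (∑ i ∈ Finset.range (m * (d + 1)), (b (1 + i) : ℝ)) ≤ m * d := by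
    intro m
    induction m with
    | zero => simp
    | succ m ih =>
      have hsplit : (m + 1) * (d + 1) = m * (d + 1) + (d + 1) := by ring
      rw [hsplit, Finset.sum_range_add]
      have hblock : (∑ i ∈ Finset.range (d + 1), (b (1 + (m * (d + 1) + i)) : ℝ)) ≤ d := by
        rw [Finset.sum_range_succ']
        have h0 : (b (1 + (m * (d + 1) + 0)) : ℝ) = 0 := by
          rw [hb]
          have : (1 + (m * (d + 1) + 0)) % (d + 1) = 1 := by
            rw [add_zero, Nat.add_mul_mod_self_right, Nat.mod_eq_of_lt (by omega)]
          rw [this]; simp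
        rw [h0, add_zero]
        calc (∑ i ∈ Finset.range d, (b (1 + (m * (d + 1) + (i + 1))) : ℝ))
            ≤ ∑ i ∈ Finset.range d, (1 : ℝ) := by
              apply Finset.sum_le_sum
              intro i _
              rw [hb]; split <;> norm_num
          _ = d := by simp
      push_cast
      push_cast at ih
      linarith
  -- pick m large
  have heps : 0 < ((d : ℝ) + 1) * B - d := by nlinarith
  obtain ⟨m, hm⟩ := exists_nat_gt ((E 1 - B + 1) / (((d : ℝ) + 1) * B - d))
  have hm' : E 1 - B + 1 < m * (((d : ℝ) + 1) * B - d) := by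
    rw [div_lt_iff₀ heps] at hm
    linarith
  have h1 := hrec (m * (d + 1))
  have h2 := hsum m
  have h3 := hbound (1 + m * (d + 1)) (by omega)
  have hcast : ((m * (d + 1) : ℕ) : ℝ) = m * ((d : ℝ) + 1) := by push_cast; ring
  rw [hcast] at h1
  nlinarith
end

section
/- Outage avoidance for SEC (sufficiency, single-subblock step): let 0 < B < 1, L, w positive integers with w ≤ L, w ≥ LB, E_max ≥ 2(L−w)B, and suppose E(1) ≥ (L−w)B with E(1) ≤ E_max. Then for any binary block b₁…b_L with at least w ones, the process E(i+1) = min(max(E(i)+b_i−B,0), E_max) satisfies E(i) + b_i ≥ B for all 1 ≤ i ≤ L (no outage), and moreover E(L+1) ≥ (L−w)B. -/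
/-- Outage avoidance for SEC codes (sufficiency, single-subblock step). -/
theorem stmt_18 (L w : ℕ) (hw : 1 ≤ w) (hwL : w ≤ L) (B Emax : ℝ)
    (hB0 : 0 < B) (hB1 : B < 1)
    (hwB : (L : ℝ) * B ≤ (w : ℝ))
    (hEmax : 2 * ((L : ℝ) - w) * B ≤ Emax)
    (b : ℕ → ℕ) (hbin : ∀ i, b i ≤ 1)
    (hones : w ≤ ∑ i ∈ Finset.Icc 1 L, b i)
    (E : ℕ → ℝ)
    (hE1 : ((L : ℝ) - w) * B ≤ E 1) (hE1max : E 1 ≤ Emax)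
    (hdyn : ∀ i, 1 ≤ i → E (i + 1) = min (max (E i + (b i : ℝ) - B) 0) Emax) :
    (∀ i, 1 ≤ i → i ≤ L → B ≤ E i + (b i : ℝ)) ∧ ((L : ℝ) - w) * B ≤ E (L + 1) := by
  set S : ℕ → ℕ := fun i => ∑ j ∈ Finset.Ico 1 i, b j with hSdef
  have hLw : (0:ℝ) ≤ (L:ℝ) - w := by
    have : (w:ℝ) ≤ L := by exact_mod_cast hwL
    linarith
  have hE1nn : 0 ≤ E 1 := le_trans (by positivity) hE1
  have hEmax0 : 0 ≤ Emax := le_trans (by positivity) hEmax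
  have hSstep : ∀ i, 1 ≤ i → S (i+1) = S i + b i := by
    intro i hi
    simpa [hSdef] using Finset.sum_Ico_succ_top hi b
  have hSle : ∀ i, 1 ≤ i → (S i : ℝ) ≤ (i:ℝ) - 1 := by
    intro i hi
    have h1 : S i ≤ ∑ j ∈ Finset.Ico 1 i, 1 :=
      Finset.sum_le_sum (fun j _ => hbin j)
    simp only [Finset.sum_const, smul_eq_mul, mul_one, Nat.card_Ico] at h1
    have : (S i : ℝ) ≤ ((i - 1 : ℕ) : ℝ) := by exact_mod_cast h1
    rwa [Nat.cast_sub hi, Nat.cast_one] at this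
  have hSw : w ≤ S (L+1) := by
    have : Finset.Ico 1 (L+1) = Finset.Icc 1 L := by
      rw [Finset.Ico_add_one_right_eq_Icc]
    simpa [hSdef, this] using hones
  have hZ : ∀ i, 1 ≤ i → i ≤ L + 1 → (i:ℝ) - 1 - S i ≤ (L:ℝ) - w := by
    intro i hi hiL
    have hsplit : S i + ∑ j ∈ Finset.Ico i (L+1), b j = S (L+1) := by
      simpa [hSdef] using Finset.sum_Ico_consecutive b hi hiL
    have htail : ∑ j ∈ Finset.Ico i (L+1), b j ≤ ∑ j ∈ Finset.Ico i (L+1), 1 :=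
      Finset.sum_le_sum (fun j _ => hbin j)
    simp only [Finset.sum_const, smul_eq_mul, mul_one, Nat.card_Ico] at htail
    have hw' : w ≤ S i + (L + 1 - i) := by omega
    have hw'' : (w:ℝ) ≤ (S i : ℝ) + ((L + 1 - i : ℕ) : ℝ) := by exact_mod_cast hw'
    rw [Nat.cast_sub hiL] at hw''
    push_cast at hw''
    linarith
  -- outage-freeness from the invariant at i
  have hout : ∀ i, 1 ≤ i → i ≤ L →
      min (E 1 + (S i:ℝ) - ((i:ℝ)-1)*B) (Emax - ((i:ℝ)-1-(S i:ℝ))*B) ≤ E i →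
      0 ≤ E i → B ≤ E i + (b i : ℝ) := by
    intro i hi hiL hmin hnn
    rcases Nat.le_one_iff_eq_zero_or_eq_one.mp (hbin i) with h | h
    · rw [h]
      push_cast
      -- b i = 0 : need B ≤ E i; zeros strictly fewer before i
      have hz : (i:ℝ) - S i ≤ (L:ℝ) - w := by
        have := hZ (i+1) (by omega) (by omega)
        rw [hSstep i hi, h] at this
        push_cast at this
        linarith
      have hS0 : (0:ℝ) ≤ S i := by positivity
      rcases le_total (E 1 + (S i:ℝ) - ((i:ℝ)-1)*B) (Emax - ((i:ℝ)-1-(S i:ℝ))*B)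
        with hc | hc
      · rw [min_eq_left hc] at hmin
        nlinarith
      · rw [min_eq_right hc] at hmin
        nlinarith
    · rw [h]; push_cast; linarith
  have key : ∀ i, 1 ≤ i → i ≤ L + 1 →
      0 ≤ E i ∧
      min (E 1 + (S i:ℝ) - ((i:ℝ)-1)*B) (Emax - ((i:ℝ)-1-(S i:ℝ))*B) ≤ E i := by
    intro i hi
    induction i, hi using Nat.le_induction with
    | base =>
      intro _
      refine ⟨hE1nn, ?_⟩
      have hS1 : S 1 = 0 := by simp [hSdef]
      rw [hS1]
      push_cast
      have : E 1 + 0 - (1-1)*B = E 1 := by ring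
      calc min (E 1 + 0 - ((1:ℝ)-1)*B) (Emax - ((1:ℝ)-1-0)*B)
          ≤ E 1 + 0 - ((1:ℝ)-1)*B := min_le_left _ _
        _ = E 1 := by ring
    | succ i hi ih =>
      intro hiL1
      have hiL : i ≤ L := by omega
      obtain ⟨hnn, hmin⟩ := ih (by omega)
      have hB : B ≤ E i + (b i : ℝ) := hout i hi hiL hmin hnn
      have hdyn' : E (i+1) = min (E i + (b i:ℝ) - B) Emax := by
        rw [hdyn i hi, max_eq_left (by linarith)]
      have hnn' : 0 ≤ E (i+1) := by
        rw [hdyn']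
        exact le_min (by linarith) hEmax0
      refine ⟨hnn', ?_⟩
      rw [hdyn']
      have hSnext : (S (i+1) : ℝ) = (S i : ℝ) + (b i : ℝ) := by
        rw [hSstep i hi]; push_cast; ring
      have hZnn : (0:ℝ) ≤ ((i+1:ℕ):ℝ) - 1 - S (i+1) := by
        have := hSle (i+1) (by omega)
        linarith
      refine le_min ?_ ?_
      · -- ≤ E i + b i − B
        rcases Nat.le_one_iff_eq_zero_or_eq_one.mp (hbin i) with h | h
        · rcases le_total (E 1 + (S i:ℝ) - ((i:ℝ)-1)*B) (Emax - ((i:ℝ)-1-(S i:ℝ))*B)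
            with hc | hc
          · rw [min_eq_left hc] at hmin
            refine (min_le_left _ _).trans ?_
            rw [hSnext, h]
            push_cast
            linarith
          · rw [min_eq_right hc] at hmin
            refine (min_le_right _ _).trans ?_
            rw [hSnext, h]
            push_cast
            linarith
        · rcases le_total (E 1 + (S i:ℝ) - ((i:ℝ)-1)*B) (Emax - ((i:ℝ)-1-(S i:ℝ))*B)
            with hc | hc
          · rw [min_eq_left hc] at hmin
            refine (min_le_left _ _).trans ?_
            rw [hSnext, h]
            push_cast
            linarith
          · rw [min_eq_right hc] at hmin
            refine (min_le_right _ _).trans ?_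
            rw [hSnext, h]
            push_cast
            linarith
      · -- ≤ Emax
        refine (min_le_right _ _).trans ?_
        nlinarith
  constructor
  · intro i hi hiL
    obtain ⟨hnn, hmin⟩ := key i hi (by omega)
    exact hout i hi hiL hmin hnn
  · obtain ⟨hnn, hmin⟩ := key (L+1) (by omega) (le_refl _)
    have hSw' : (w:ℝ) ≤ (S (L+1) : ℝ) := by exact_mod_cast hSw
    have hSle' : (S (L+1) : ℝ) ≤ (L:ℝ) := by
      have := hSle (L+1) (by omega)
      push_cast at this
      linarith
    rcases le_total (E 1 + (S (L+1):ℝ) - (((L+1:ℕ):ℝ)-1)*B)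
        (Emax - (((L+1:ℕ):ℝ)-1-(S (L+1):ℝ))*B) with hc | hc
    · rw [min_eq_left hc] at hmin
      push_cast at hmin
      nlinarith
    · rw [min_eq_right hc] at hmin
      push_cast at hmin
      nlinarith
end
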